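/- arXiv:1508.03674 — 5 statements merged into one kernel-verified Lean document; each statement's English description precedes it below -/
import Mathlib

section
/- For any permutation π of {1,…,n}, there exists a 312-avoiding permutation σ of {1,…,n} such that the composition σ∘π is a cyclic permutation (i.e., has exactly one orbit on {1,…,n}). -/
/-- `σ` contains the pattern 312: indices `i₁ < i₂ < i₃` with `σ i₂ < σ i₃ < σ i₁`. -/
def Contains312 {n : ℕ} (σ : Equiv.Perm (Fin n)) : Prop :=
  ∃ i₁ i₂ i₃ : Fin n, i₁ < i₂ ∧ i₂ < i₃ ∧ σ i₂ < σ i₃ ∧ σ i₃ < σ i₁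

/-- A permutation is cyclic if it has exactly one orbit. -/
def IsCyclicPerm {n : ℕ} (σ : Equiv.Perm (Fin n)) : Prop :=
  ∀ x y : Fin n, σ.SameCycle x y

/-- Multiplying by a transposition merges cycles: if `a` and `b` are in different
cycles of `ρ`, then every element of the cycle of `b` is in the cycle of `a`
in `swap a b * ρ`. -/
lemma swap_mul_sameCycle {α : Type*} [DecidableEq α] [Fintype α]
    (ρ : Equiv.Perm α) (a b x : α) (hab : ¬ ρ.SameCycle a b)
    (hx : ρ.SameCycle b x) : (Equiv.swap a b * ρ).SameCycle x a := by
  classical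
  obtain ⟨m, hm0, -, hm⟩ := hx.symm.exists_pow_eq''
  have hP : ∃ i, 0 < i ∧ (ρ ^ i) x = b := ⟨m, hm0, hm⟩
  obtain ⟨hM0, hMb⟩ := Nat.find_spec hP
  set M := Nat.find hP with hMdef
  have key : ∀ j, j < M → ((Equiv.swap a b * ρ) ^ j) x = (ρ ^ j) x := by
    intro j
    induction j with
    | zero => intro _; simp
    | succ j ih =>
      intro hj
      have hj' : j < M := Nat.lt_of_succ_lt hj
      have hne_b : (ρ ^ (j + 1)) x ≠ b := by
        intro h
        exact Nat.find_min hP hj ⟨j.succ_pos, h⟩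
      have hne_a : (ρ ^ (j + 1)) x ≠ a := by
        intro h
        have hbx : ρ.SameCycle b ((ρ ^ (j + 1)) x) :=
          hx.trans ⟨((j : ℤ) + 1), by
            rw [show ((j : ℤ) + 1) = ((j + 1 : ℕ) : ℤ) by push_cast; ring, zpow_natCast]⟩
        rw [h] at hbx
        exact hab hbx.symm
      rw [pow_succ', pow_succ', Equiv.Perm.mul_apply, Equiv.Perm.mul_apply, ih hj',
        Equiv.Perm.mul_apply]
      have : ρ ((ρ ^ j) x) = (ρ ^ (j + 1)) x := by rw [pow_succ', Equiv.Perm.mul_apply]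
      rw [this, Equiv.swap_apply_of_ne_of_ne hne_a hne_b]
  obtain ⟨M', hM'⟩ : ∃ M', M = M' + 1 := ⟨M - 1, (Nat.succ_pred_eq_of_pos hM0).symm⟩
  refine ⟨(M : ℤ), ?_⟩
  rw [zpow_natCast, hM', pow_succ', Equiv.Perm.mul_apply, key M' (by omega),
    Equiv.Perm.mul_apply]
  have : ρ ((ρ ^ M') x) = (ρ ^ (M' + 1)) x := by rw [pow_succ', Equiv.Perm.mul_apply]
  rw [this, ← hM', hMb, Equiv.swap_apply_right]

theorem stmt_0 (n : ℕ) (π : Equiv.Perm (Fin n)) :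
    ∃ σ : Equiv.Perm (Fin n), ¬ Contains312 σ ∧ IsCyclicPerm (σ * π) := by
  have main : ∀ j : ℕ, ∃ σ : Equiv.Perm (Fin n),
      (∀ x : Fin n, (x : ℕ) < n - j → σ x = x) ∧
      (∀ x : Fin n, ((σ x : ℕ)) ≤ (x : ℕ) + 1) ∧
      (∀ x y : Fin n, (σ x : ℕ) ≤ (x : ℕ) → (σ x : ℕ) ≤ (y : ℕ) → (y : ℕ) < (x : ℕ) →
        (σ y : ℕ) = (y : ℕ) + 1) ∧
      (∀ x y : Fin n, n - j ≤ (x : ℕ) → n - j ≤ (y : ℕ) → (σ * π).SameCycle x y) := by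
    intro j
    induction j with
    | zero =>
      refine ⟨1, fun x _ => rfl, fun x => by simp, fun x y hx hxy hyx => by
        simp only [Equiv.Perm.one_apply] at hx hxy ⊢; omega,
        fun x y hx hy => absurd x.isLt (by omega)⟩
    | succ j ih =>
      obtain ⟨σ, h1, h2, h3, h4⟩ := ih
      by_cases hjn : n ≤ j
      · refine ⟨σ, fun x hx => h1 x (by omega), h2, h3, fun x y hx hy =>
          h4 x y (by omega) (by omega)⟩
      · push_neg at hjn
        set k := n - j - 1 with hk
        have hnj : n - j = k + 1 := by omega
        have hnj1 : n - (j + 1) = k := by omega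
        by_cases htop : k + 1 = n
        · -- top step : only one element ≥ k
          refine ⟨σ, fun x hx => h1 x (by omega), h2, h3, fun x y hx hy => ?_⟩
          have hx' : (x : ℕ) = k := by have := x.isLt; omega
          have hy' : (y : ℕ) = k := by have := y.isLt; omega
          have : x = y := Fin.ext (by omega)
          rw [this]
        · have hk1n : k + 1 < n := by omega
          have hkn : k < n := by omega
          set a : Fin n := ⟨k, hkn⟩ with ha
          set b : Fin n := ⟨k + 1, hk1n⟩ with hb
          have haval : (a : ℕ) = k := rfl
          have hbval : (b : ℕ) = k + 1 := rfl
          have hfix : ∀ x : Fin n, (x : ℕ) ≤ k → σ x = x := fun x hx => h1 x (by omega)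
          have hge : ∀ x : Fin n, k + 1 ≤ (x : ℕ) → k + 1 ≤ (σ x : ℕ) := by
            intro x hx
            by_contra h
            push_neg at h
            have h' : σ (σ x) = σ x := hfix _ (by omega)
            have := σ.injective h'
            rw [← this] at hx
            omega
          by_cases c : (σ * π).SameCycle a b
          · refine ⟨σ, fun x hx => h1 x (by omega), h2, h3, fun x y hx hy => ?_⟩
            have key : ∀ z : Fin n, n - (j+1) ≤ (z : ℕ) → (σ * π).SameCycle a z := by
              intro z hz
              rcases eq_or_lt_of_le (hnj1 ▸ hz) with h | h
              · have : z = a := Fin.ext (by omega)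
                rw [this]
              · exact c.trans (h4 b z (by omega) (by omega))
            exact (key x hx).symm.trans (key y hy)
          · refine ⟨Equiv.swap a b * σ, ?_, ?_, ?_, ?_⟩
            · intro x hx
              rw [hnj1] at hx
              have hx' : σ x = x := hfix x (by omega)
              rw [Equiv.Perm.mul_apply, hx',
                Equiv.swap_apply_of_ne_of_ne
                  (fun h => by rw [h] at hx; omega)
                  (fun h => by rw [h] at hx; omega)]
            · intro x
              rw [Equiv.Perm.mul_apply]
              by_cases hxa : σ x = a
              · have hxx : x = a := σ.injective (by rw [hxa, hfix a (le_refl k)])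
                rw [hxa, Equiv.swap_apply_left, hxx]
              · by_cases hxb : σ x = b
                · have hxk : k + 1 ≤ (x : ℕ) := by
                    by_contra h
                    push_neg at h
                    have := hfix x (by omega)
                    rw [this] at hxb
                    have : (x : ℕ) = (b : ℕ) := congrArg Fin.val hxb
                    omega
                  rw [hxb, Equiv.swap_apply_right]
                  omega
                · rw [Equiv.swap_apply_of_ne_of_ne hxa hxb]
                  exact h2 x
            · intro x y hx1 hx2 hyx
              rw [Equiv.Perm.mul_apply] at hx1 hx2 ⊢
              by_cases hxa : σ x = a
              · have hxx : x = a := σ.injective (by rw [hxa, hfix a (le_refl k)])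
                rw [hxa, Equiv.swap_apply_left] at hx1
                rw [hxx] at hx1
                omega
              · by_cases hxb : σ x = b
                · have hxk : k + 1 ≤ (x : ℕ) := by
                    by_contra h
                    push_neg at h
                    have := hfix x (by omega)
                    rw [this] at hxb
                    have : (x : ℕ) = (b : ℕ) := congrArg Fin.val hxb
                    omega
                  rw [hxb, Equiv.swap_apply_right] at hx1 hx2
                  rcases eq_or_lt_of_le (show k ≤ (y : ℕ) by omega) with h | h
                  · have hya : y = a := Fin.ext (by omega)
                    rw [hya, hfix a (le_refl k), Equiv.swap_apply_left]
                  · have hy := h3 x y (by rw [hxb]; omega)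
                      (by rw [hxb]; omega) hyx
                    rw [Equiv.swap_apply_of_ne_of_ne
                      (fun hh => by rw [hh] at hy; omega)
                      (fun hh => by rw [hh] at hy; omega)]
                    exact hy
                · rw [Equiv.swap_apply_of_ne_of_ne hxa hxb] at hx1 hx2
                  by_cases hxk : (x : ℕ) ≤ k
                  · rw [hfix x hxk] at hx1 hx2
                    omega
                  · push_neg at hxk
                    have hσx : k + 1 ≤ (σ x : ℕ) := hge x hxk
                    have hσx' : k + 2 ≤ (σ x : ℕ) := by
                      rcases eq_or_lt_of_le hσx with h | h
                      · exact absurd (Fin.ext h.symm : σ x = b) hxb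
                      · omega
                    have hy := h3 x y hx1 hx2 hyx
                    rw [Equiv.swap_apply_of_ne_of_ne
                      (fun hh => by rw [hh] at hy; omega)
                      (fun hh => by rw [hh] at hy; omega)]
                    exact hy
            · intro x y hx hy
              rw [hnj1] at hx hy
              have hrw : Equiv.swap a b * σ * π = Equiv.swap a b * (σ * π) := by
                rw [mul_assoc]
              have key : ∀ z : Fin n, k ≤ (z : ℕ) →
                  (Equiv.swap a b * σ * π).SameCycle z a := by
                intro z hz
                rcases eq_or_lt_of_le hz with h | h
                · have : z = a := Fin.ext (by omega)
                  rw [this]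
                · rw [hrw]
                  exact swap_mul_sameCycle (σ * π) a b z c
                    (h4 b z (by omega) (by omega))
              exact (key x hx).trans (key y hy).symm
  obtain ⟨σ, h1, h2, h3, h4⟩ := main n
  refine ⟨σ, ?_, fun x y => h4 x y (by omega) (by omega)⟩
  rintro ⟨i₁, i₂, i₃, h12, h23, hA, hB⟩
  rw [Fin.lt_def] at h12 h23 hA hB
  have e1 := h2 i₁
  have e3 : (σ i₃ : ℕ) ≤ (i₁ : ℕ) := by omega
  have := h3 i₃ i₂ (by omega) (by omega) (by omega)
  omega
end

section
/- For any permutation π of {1,…,n} and any pattern p ∈ {312, 231, 213, 132}, there exists a p-avoiding permutation σ of {1,…,n} such that σ∘π is a cyclic permutation. -/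
/-- `σ` contains the pattern `p ∈ S₃`. -/
def ContainsPat {n : ℕ} (p : Equiv.Perm (Fin 3)) (σ : Equiv.Perm (Fin n)) : Prop :=
  ∃ f : Fin 3 → Fin n, StrictMono f ∧ ∀ a b : Fin 3, p a < p b ↔ σ (f a) < σ (f b)

noncomputable def pat312 : Equiv.Perm (Fin 3) := Equiv.ofBijective ![2, 0, 1] (by decide)
noncomputable def pat231 : Equiv.Perm (Fin 3) := Equiv.ofBijective ![1, 2, 0] (by decide)
noncomputable def pat213 : Equiv.Perm (Fin 3) := Equiv.ofBijective ![1, 0, 2] (by decide)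
noncomputable def pat132 : Equiv.Perm (Fin 3) := Equiv.ofBijective ![0, 2, 1] (by decide)

/-!
For `312` induct on `n`. Write `π = (0 π(0)) · π̂'`, where `x̂` (`succPerm x`) fixes `0` and acts as
`x` on the successors, and let `τ` avoid `312` with `τ π'` cyclic. If `π(0) ≠ 0` take `σ = τ̂`; if
`π(0) = 0` take `σ = (0 1) · τ̂`. Either way `σ π = (0 m) · (τ π')^` with `m ≠ 0`, and the
transposition splices the fixed point `0` into the cycle of `(τ π')^`. As a word, `σ` is a value
`≤ 1` followed by a copy of `τ`, so no occurrence of `312` in `σ` starts at position `0`.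

The other three patterns are the inverse, the reverse and the complement of `312`, and these
symmetries transport the statement.
-/

open Equiv Equiv.Perm

section Patterns

variable {n : ℕ} {p : Perm (Fin 3)} {σ : Perm (Fin n)}

theorem ContainsPat.three_le (h : ContainsPat p σ) : 3 ≤ n := by
  obtain ⟨f, hf, -⟩ := h
  simpa using Fin.le_of_injective f hf.injective

theorem containsPat312_iff :
    ContainsPat pat312 σ ↔ ∃ i j k : Fin n, i < j ∧ j < k ∧ σ j < σ k ∧ σ k < σ i := by
  constructor
  · rintro ⟨f, hf, h⟩
    exact ⟨f 0, f 1, f 2, hf (by decide), hf (by decide),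
      (h 1 2).mp (by decide), (h 2 0).mp (by decide)⟩
  · rintro ⟨i, j, k, hij, hjk, h1, h2⟩
    refine ⟨![i, j, k], Fin.strictMono_iff_lt_succ.mpr fun a => ?_, fun a b => ?_⟩
    · fin_cases a <;> assumption
    · fin_cases a <;> fin_cases b <;> simp [pat312] <;> order

theorem ContainsPat.inv (h : ContainsPat p σ) : ContainsPat p⁻¹ σ⁻¹ := by
  obtain ⟨f, hf, hp⟩ := h
  refine ⟨fun a => σ (f (p⁻¹ a)), fun a b hab => (hp _ _).mp (by simpa using hab), fun a b => ?_⟩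
  simpa using hf.lt_iff_lt.symm

theorem ContainsPat.of_mul_revPerm (h : ContainsPat (p * Fin.revPerm) (σ * Fin.revPerm)) :
    ContainsPat p σ := by
  obtain ⟨f, hf, hp⟩ := h
  refine ⟨fun a => (f a.rev).rev, fun a b hab => Fin.rev_lt_rev.mpr (hf (Fin.rev_lt_rev.mpr hab)),
    fun a b => ?_⟩
  simpa [Fin.revPerm_apply] using hp a.rev b.rev

theorem ContainsPat.of_revPerm_mul (h : ContainsPat (Fin.revPerm * p) (Fin.revPerm * σ)) :
    ContainsPat p σ := by
  obtain ⟨f, hf, hp⟩ := h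
  refine ⟨f, hf, fun a b => ?_⟩
  simpa [Fin.revPerm_apply] using hp b a

theorem IsCyclicPerm.inv (h : IsCyclicPerm σ) : IsCyclicPerm σ⁻¹ :=
  fun x y => sameCycle_inv.mpr (h x y)

theorem IsCyclicPerm.mul_comm {τ : Perm (Fin n)} (h : IsCyclicPerm (σ * τ)) :
    IsCyclicPerm (τ * σ) := by
  have hconj : τ * σ = τ * (σ * τ) * τ⁻¹ := by group
  exact fun x y => hconj ▸ sameCycle_conj.mpr (h _ _)

theorem isCyclicPerm_of_le_one (hn : n ≤ 1) : IsCyclicPerm σ :=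
  have := Fin.subsingleton_iff_le_one.mpr hn
  fun x y => Subsingleton.elim x y ▸ .rfl

def CyclicallyAvoidable (p : Perm (Fin 3)) : Prop :=
  ∀ (n : ℕ) (π : Perm (Fin n)), ∃ σ : Perm (Fin n), ¬ ContainsPat p σ ∧ IsCyclicPerm (σ * π)

theorem CyclicallyAvoidable.inv (h : CyclicallyAvoidable p) : CyclicallyAvoidable p⁻¹ := by
  intro n π
  obtain ⟨τ, hτ, hτπ⟩ := h n π⁻¹
  refine ⟨τ⁻¹, fun hc => hτ (by simpa using hc.inv), ?_⟩
  have hπτ : IsCyclicPerm (π * τ⁻¹) := by simpa only [mul_inv_rev, inv_inv] using hτπ.inv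
  exact hπτ.mul_comm

theorem CyclicallyAvoidable.mul_revPerm (h : CyclicallyAvoidable p) :
    CyclicallyAvoidable (p * Fin.revPerm) := by
  intro n π
  obtain ⟨τ, hτ, hτπ⟩ := h n (Fin.revPerm * π)
  exact ⟨τ * Fin.revPerm, fun hc => hτ hc.of_mul_revPerm, by rwa [mul_assoc]⟩

theorem CyclicallyAvoidable.revPerm_mul (h : CyclicallyAvoidable p) :
    CyclicallyAvoidable (Fin.revPerm * p) := by
  intro n π
  obtain ⟨τ, hτ, hτπ⟩ := h n (π * Fin.revPerm)
  refine ⟨Fin.revPerm * τ, fun hc => hτ hc.of_revPerm_mul, ?_⟩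
  rw [← mul_assoc] at hτπ
  simpa only [mul_assoc] using hτπ.mul_comm

end Patterns

theorem sameCycle_swap_mul_of_apply_eq_self {α : Type*} [DecidableEq α] [Finite α] {f : Perm α}
    {a b y : α} (ha : f a = a) (hy : f.SameCycle b y) : (swap a b * f).SameCycle a y := by
  have hab : (swap a b * f).SameCycle a b := ⟨1, by simp [ha]⟩
  obtain ⟨k, rfl⟩ := hy.exists_nat_pow_eq
  clear hy
  induction k with
  | zero => exact hab
  | succ k ih =>
    rw [pow_succ', mul_apply]
    set u := (f ^ k) b
    by_cases hub : f u = b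
    · rwa [hub]
    by_cases hua : f u = a
    · rw [hua]
    · have hstep : (swap a b * f) u = f u := by
        rw [mul_apply, swap_apply_of_ne_of_ne hua hub]
      exact ih.trans (hstep ▸ sameCycle_apply_right.mpr .rfl)

section SuccPerm

variable {n : ℕ}

def succPerm (e : Perm (Fin n)) : Perm (Fin (n + 1)) :=
  e.extendDomain (finSuccAboveEquiv 0)

@[simp] theorem succPerm_zero (e : Perm (Fin n)) : succPerm e 0 = 0 :=
  e.extendDomain_apply_not_subtype _ (not_not.mpr rfl)

@[simp] theorem succPerm_succ (e : Perm (Fin n)) (x : Fin n) : succPerm e x.succ = (e x).succ := by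
  simpa [succPerm, finSuccAboveEquiv_apply] using e.extendDomain_apply_image (finSuccAboveEquiv 0) x

theorem succPerm_mul (e e' : Perm (Fin n)) : succPerm (e * e') = succPerm e * succPerm e' :=
  (extendDomain_mul _ e e').symm

theorem sameCycle_succPerm_succ {e : Perm (Fin n)} {x y : Fin n} :
    (succPerm e).SameCycle x.succ y.succ ↔ e.SameCycle x y := by
  simpa [succPerm, finSuccAboveEquiv_apply] using
    sameCycle_extendDomain (g := e) (f := finSuccAboveEquiv 0) (x := x) (y := y)

theorem exists_eq_swap_mul_succPerm (π : Perm (Fin (n + 1))) :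
    ∃ e : Perm (Fin n), π = swap 0 (π 0) * succPerm e := by
  obtain ⟨⟨p, e⟩, rfl⟩ := decomposeFin.symm.surjective π
  refine ⟨e, Equiv.ext fun x => ?_⟩
  cases x using Fin.cases <;> simp

theorem IsCyclicPerm.swap_zero_mul_succPerm {ρ : Perm (Fin n)} (hρ : IsCyclicPerm ρ)
    {m : Fin (n + 1)} (hm : m ≠ 0) : IsCyclicPerm (swap 0 m * succPerm ρ) := by
  obtain ⟨w, rfl⟩ := Fin.exists_succ_eq.mpr hm
  have h0 : ∀ y, (swap 0 w.succ * succPerm ρ).SameCycle 0 y := by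
    refine Fin.cases .rfl fun z => ?_
    exact sameCycle_swap_mul_of_apply_eq_self (succPerm_zero ρ)
      (sameCycle_succPerm_succ.mpr (hρ w z))
  exact fun x y => (h0 x).symm.trans (h0 y)

theorem swap_zero_succ_eq_succAbove {v : Fin (n + 1)} (hv : (v : ℕ) ≤ 1) (x : Fin n) :
    swap 0 v x.succ = v.succAbove x := by
  simp only [swap_apply_def, Fin.succAbove, Fin.ext_iff, Fin.lt_def]
  split_ifs <;> simp_all <;> omega

theorem not_containsPat312_swap_zero_mul_succPerm {τ : Perm (Fin n)}
    (hτ : ¬ ContainsPat pat312 τ) {v : Fin (n + 1)} (hv : (v : ℕ) ≤ 1) :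
    ¬ ContainsPat pat312 (swap 0 v * succPerm τ) := by
  set σ := swap 0 v * succPerm τ
  have hσ0 : σ 0 = v := by simp [σ]
  have hσ : ∀ x, σ x.succ = v.succAbove (τ x) := by simp [σ, swap_zero_succ_eq_succAbove hv]
  rw [containsPat312_iff] at hτ ⊢
  rintro ⟨i, j, k, hij, hjk, hσjk, hσki⟩
  have hi : i ≠ 0 := by
    rintro rfl
    rw [hσ0] at hσki
    rw [Fin.lt_def] at hσjk hσki
    omega
  obtain ⟨i, rfl⟩ := Fin.exists_succ_eq.mpr hi
  obtain ⟨j, rfl⟩ := Fin.exists_succ_eq.mpr (Fin.ne_zero_of_lt hij)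
  obtain ⟨k, rfl⟩ := Fin.exists_succ_eq.mpr (Fin.ne_zero_of_lt hjk)
  simp only [hσ, Fin.succAbove_lt_succAbove_iff, Fin.succ_lt_succ_iff] at hij hjk hσjk hσki
  exact hτ ⟨i, j, k, hij, hjk, hσjk, hσki⟩

end SuccPerm

theorem exists_not_containsPat312_isCyclicPerm_mul : ∀ (n : ℕ) (π : Perm (Fin n)),
    ∃ σ : Perm (Fin n), ¬ ContainsPat pat312 σ ∧ IsCyclicPerm (σ * π)
  | 0, _ | 1, _ => ⟨1, fun h => by have := h.three_le; omega, isCyclicPerm_of_le_one (by omega)⟩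
  | n + 2, π => by
    obtain ⟨π', hπ⟩ := exists_eq_swap_mul_succPerm π
    obtain ⟨τ, hτ, hτπ'⟩ := exists_not_containsPat312_isCyclicPerm_mul (n + 1) π'
    by_cases h0 : π 0 = 0
    · refine ⟨swap 0 1 * succPerm τ, not_containsPat312_swap_zero_mul_succPerm hτ (by simp), ?_⟩
      rw [hπ, h0, swap_self, ← Perm.one_def, one_mul, mul_assoc, ← succPerm_mul]
      exact hτπ'.swap_zero_mul_succPerm one_ne_zero
    · have hσ := not_containsPat312_swap_zero_mul_succPerm hτ (v := 0) (by simp)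
      rw [swap_self, ← Perm.one_def, one_mul] at hσ
      refine ⟨succPerm τ, hσ, ?_⟩
      rw [hπ, ← mul_assoc, mul_swap_eq_swap_mul, succPerm_zero, mul_assoc, ← succPerm_mul]
      exact hτπ'.swap_zero_mul_succPerm (succPerm_zero τ ▸ (succPerm τ).injective.ne h0)

theorem pat312_inv : pat312⁻¹ = pat231 :=
  Equiv.ext fun a => by fin_cases a <;> rw [Perm.inv_eq_iff_eq] <;> rfl

theorem pat312_mul_revPerm : pat312 * Fin.revPerm = pat213 :=
  Equiv.ext fun a => by fin_cases a <;> rfl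

theorem revPerm_mul_pat312 : Fin.revPerm * pat312 = pat132 :=
  Equiv.ext fun a => by fin_cases a <;> rfl

theorem stmt_1 (n : ℕ) (π : Equiv.Perm (Fin n)) (p : Equiv.Perm (Fin 3))
    (hp : p ∈ ({pat312, pat231, pat213, pat132} : Set (Equiv.Perm (Fin 3)))) :
    ∃ σ : Equiv.Perm (Fin n), ¬ ContainsPat p σ ∧ IsCyclicPerm (σ * π) := by
  suffices CyclicallyAvoidable p from this n π
  have h312 : CyclicallyAvoidable pat312 := exists_not_containsPat312_isCyclicPerm_mul
  simp only [Set.mem_insert_iff, Set.mem_singleton_iff] at hp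
  rcases hp with rfl | rfl | rfl | rfl
  · exact h312
  · exact pat312_inv ▸ h312.inv
  · exact pat312_mul_revPerm ▸ h312.mul_revPerm
  · exact revPerm_mul_pat312 ▸ h312.revPerm_mul
end

section
/- If A and B are subsets of {1,…,n} with |A| = |B|, then there exists a 132-avoiding permutation π ∈ S_n with π(A) = B. -/
/-!
Every permutation of the form `(σ ⊕ 1) ⊖ τ` with `σ, τ` avoiding 132 avoids 132: the maximum sits
at some position `k`, the entries before it are a 132-avoiding arrangement of the top values
`[m, m + k)` and the entries after it one of the bottom values `[0, m)`, where `m = n - 1 - k`.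
So it suffices to find `k` with `k ∈ A ↔ n - 1 ∈ B` and `|A ∩ [0, k)| = |B ∩ [m, m + k)|`, and to
recurse into both blocks. If `n - 1 ∈ A ↔ n - 1 ∈ B`, take `k = n - 1`. Otherwise
`f k = |A ∩ [0, k)| + |B ∩ [0, n - 1 - k)|` moves in steps of at most one from `|B ∩ [0, n - 1)|`
at `k = 0` to one more (if `n - 1 ∈ B`) or one less (if `n - 1 ∈ A`) at `k = n - 1`; at the last
`k` where it still takes its initial value it steps up, resp. down, which forces `k ∈ A`,
resp. `k ∉ A`.

Sets are handled as predicates on `ℕ` counted with `Nat.count`, so that the blocks are shifts.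
-/

/-- `π` contains the pattern 132: indices `i₁ < i₂ < i₃` with `π i₁ < π i₃ < π i₂`. -/
def Contains132 {n : ℕ} (π : Equiv.Perm (Fin n)) : Prop :=
  ∃ i₁ i₂ i₃ : Fin n, i₁ < i₂ ∧ i₂ < i₃ ∧ π i₁ < π i₃ ∧ π i₃ < π i₂

open Equiv Nat

theorem exists_eq_and_succ_eq_add_one_of_succ_le {f : ℕ → ℤ} {c : ℤ} {N : ℕ}
    (hf : ∀ k < N, f (k + 1) ≤ f k + 1) (h0 : f 0 ≤ c) (hN : c < f N) :
    ∃ k < N, f k = c ∧ f (k + 1) = c + 1 := by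
  induction N with
  | zero => omega
  | succ N ih =>
    by_cases hc : c < f N
    · obtain ⟨k, hk, hfk⟩ := ih (fun k hk => hf k (by omega)) hc
      exact ⟨k, by omega, hfk⟩
    · have := hf N N.lt_succ_self
      exact ⟨N, N.lt_succ_self, by omega, by omega⟩

section SkewMax

variable {k m : ℕ} (σ : Perm (Fin k)) (τ : Perm (Fin m))

/-- The permutation `(σ ⊕ 1) ⊖ τ` of pattern-avoidance notation. -/
def skewMaxFun (i : Fin (k + m + 1)) : Fin (k + m + 1) :=
  if h : (i : ℕ) < k then ⟨m + σ ⟨i, h⟩, by omega⟩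
  else if h : (i : ℕ) = k then ⟨m + k, by omega⟩
  else ⟨τ ⟨(i : ℕ) - (k + 1), by omega⟩, by omega⟩

variable {σ τ} {i : Fin (k + m + 1)}

theorem skewMaxFun_val_of_lt (h : (i : ℕ) < k) : (skewMaxFun σ τ i : ℕ) = m + σ ⟨i, h⟩ := by
  simp [skewMaxFun, h]

theorem skewMaxFun_val_of_eq (h : (i : ℕ) = k) : (skewMaxFun σ τ i : ℕ) = m + k := by
  simp [skewMaxFun, h]

theorem skewMaxFun_val_of_gt (h : k < (i : ℕ)) :
    (skewMaxFun σ τ i : ℕ) = τ ⟨(i : ℕ) - (k + 1), by omega⟩ := by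
  simp [skewMaxFun, show ¬ (i : ℕ) < k by omega, show (i : ℕ) ≠ k by omega]

variable (σ τ)

theorem skewMaxFun_injective : Function.Injective (skewMaxFun σ τ) := by
  intro i j hij
  have hv := congrArg Fin.val hij
  apply Fin.ext
  rcases lt_trichotomy (i : ℕ) k with hi | hi | hi <;>
    rcases lt_trichotomy (j : ℕ) k with hj | hj | hj <;>
    simp only [skewMaxFun_val_of_lt, skewMaxFun_val_of_eq, skewMaxFun_val_of_gt, hi, hj,
      add_right_inj, Fin.val_inj, EmbeddingLike.apply_eq_iff_eq, Fin.mk.injEq] at hv <;>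
    omega

theorem skewMaxFun_val_le (i : Fin (k + m + 1)) : (skewMaxFun σ τ i : ℕ) ≤ m + k := by
  rcases lt_trichotomy (i : ℕ) k with hi | hi | hi
  · rw [skewMaxFun_val_of_lt hi]; omega
  · rw [skewMaxFun_val_of_eq hi]
  · rw [skewMaxFun_val_of_gt hi]; omega

noncomputable def skewMax : Perm (Fin (k + m + 1)) :=
  Equiv.ofBijective _ (Finite.injective_iff_bijective.mp (skewMaxFun_injective σ τ))

theorem skewMax_apply (i : Fin (k + m + 1)) : skewMax σ τ i = skewMaxFun σ τ i := rfl

theorem not_contains132_skewMax (hσ : ¬ Contains132 σ) (hτ : ¬ Contains132 τ) :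
    ¬ Contains132 (skewMax σ τ) := by
  rintro ⟨i₁, i₂, i₃, h₁₂, h₂₃, h₁₃, h₃₂⟩
  simp only [Fin.lt_def, skewMax_apply] at h₁₂ h₂₃ h₁₃ h₃₂
  have hle₂ := skewMaxFun_val_le σ τ i₂
  rcases lt_trichotomy (i₃ : ℕ) k with h₃ | h₃ | h₃
  · refine hσ ⟨⟨i₁, by omega⟩, ⟨i₂, by omega⟩, ⟨i₃, h₃⟩, ?_, ?_, ?_, ?_⟩ <;>
      simp only [Fin.lt_def] <;>
      simp only [skewMaxFun_val_of_lt, h₃, show (i₁ : ℕ) < k by omega,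
        show (i₂ : ℕ) < k by omega] at h₁₃ h₃₂ <;> omega
  · rw [skewMaxFun_val_of_eq h₃] at h₃₂
    omega
  rcases lt_trichotomy (i₁ : ℕ) k with h₁ | h₁ | h₁
  · rw [skewMaxFun_val_of_lt h₁, skewMaxFun_val_of_gt h₃] at h₁₃
    omega
  · have := skewMaxFun_val_le σ τ i₃
    rw [skewMaxFun_val_of_eq h₁] at h₁₃
    omega
  · refine hτ ⟨⟨i₁ - (k + 1), by omega⟩, ⟨i₂ - (k + 1), by omega⟩, ⟨i₃ - (k + 1), by omega⟩,
      ?_, ?_, ?_, ?_⟩ <;>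
      simp only [Fin.lt_def] <;>
      simp only [skewMaxFun_val_of_gt, h₁, h₃, show k < (i₂ : ℕ) by omega] at h₁₃ h₃₂ <;> omega

theorem iff_skewMax_apply {A B : ℕ → Prop} (hσ : ∀ i : Fin k, A i ↔ B (m + σ i))
    (hmax : A k ↔ B (m + k)) (hτ : ∀ j : Fin m, A (k + 1 + j) ↔ B (τ j))
    (i : Fin (k + m + 1)) : A i ↔ B (skewMax σ τ i) := by
  rw [skewMax_apply]
  rcases lt_trichotomy (i : ℕ) k with hi | hi | hi
  · rw [skewMaxFun_val_of_lt hi]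
    exact hσ ⟨i, hi⟩
  · rwa [skewMaxFun_val_of_eq hi, hi]
  · rw [skewMaxFun_val_of_gt hi, ← hτ]
    simp only [show k + 1 + ((i : ℕ) - (k + 1)) = i by omega]

end SkewMax

section Split

variable {A B : ℕ → Prop} [DecidablePred A] [DecidablePred B]

theorem exists_count_add_count_eq_and_iff {N : ℕ} (h : count A (N + 1) = count B (N + 1)) :
    ∃ k ≤ N, count A k + count B (N - k) = count B N ∧ (A k ↔ B N) := by
  rw [count_succ, count_succ] at h
  by_cases hAB : A N ↔ B N
  · refine ⟨N, le_rfl, ?_, hAB⟩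
    simp only [hAB, Nat.sub_self, count_zero, add_zero] at h ⊢
    omega
  let f (k : ℕ) : ℤ := count A k + count B (N - k)
  have hstep : ∀ k < N,
      f (k + 1) = f k + (if A k then 1 else 0) - (if B (N - 1 - k) then 1 else 0) := by
    intro k hk
    have hA := count_succ A k
    have hB := count_succ B (N - 1 - k)
    rw [show N - 1 - k + 1 = N - k by omega] at hB
    simp only [f, show N - (k + 1) = N - 1 - k by omega]
    split_ifs at hA hB ⊢ <;> omega
  have hf0 : f 0 = count B N := by simp [f]
  have hfN : f N = count A N := by simp [f]
  by_cases hB : B N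
  · have hA : ¬ A N := by tauto
    simp only [hA, hB, if_true, if_false] at h
    obtain ⟨k, hk, hfk, hfk'⟩ := exists_eq_and_succ_eq_add_one_of_succ_le
      (fun k hk => by rw [hstep k hk]; split_ifs <;> omega) hf0.le (by omega)
    have := hstep k hk
    refine ⟨k, hk.le, by simp only [f] at hfk; omega, ?_⟩
    split_ifs at this with hAk <;> first | exact iff_of_true hAk hB | omega
  · have hA : A N := by tauto
    simp only [hA, hB, if_true, if_false] at h
    obtain ⟨k, hk, hfk, hfk'⟩ := exists_eq_and_succ_eq_add_one_of_succ_le (f := (- f ·))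
      (fun k hk => by simp only [hstep k hk]; split_ifs <;> omega) (by simp [hf0])
      (show -(count B N : ℤ) < -f N by omega)
    have := hstep k hk
    refine ⟨k, hk.le, by simp only [f] at hfk; omega, ?_⟩
    split_ifs at this with hAk <;> first | exact iff_of_false hAk hB | omega

end Split

theorem exists_perm_not_contains132_forall_iff (n : ℕ) (A B : ℕ → Prop) [DecidablePred A]
    [DecidablePred B] (h : count A n = count B n) :
    ∃ π : Perm (Fin n), ¬ Contains132 π ∧ ∀ i : Fin n, A i ↔ B (π i) := by
  induction n using Nat.strong_induction_on generalizing A B with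
  | _ n ih =>
  rcases n with _ | N
  · exact ⟨1, fun ⟨i, _⟩ => i.elim0, fun i => i.elim0⟩
  obtain ⟨k, hkN, hsplit, hmax⟩ := exists_count_add_count_eq_and_iff h
  obtain ⟨m, rfl⟩ : ∃ m, N = k + m := ⟨N - k, by omega⟩
  rw [Nat.add_sub_cancel_left] at hsplit
  have hA : count A (k + m + 1)
      = count A k + (if A k then 1 else 0) + count (fun j => A (k + 1 + j)) m := by
    rw [show k + m + 1 = k + 1 + m by omega, count_add, count_succ]
  have hB : count B (k + m + 1)
      = count B m + count (fun j => B (m + j)) k + (if B (k + m) then 1 else 0) := by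
    rw [count_succ, add_comm k m, count_add]
  rw [add_comm k m, count_add] at hsplit
  simp only [hmax] at hA
  obtain ⟨σ, hσ, hσAB⟩ := ih k (by omega) A (fun j => B (m + j)) (by omega)
  obtain ⟨τ, hτ, hτAB⟩ := ih m (by omega) (fun j => A (k + 1 + j)) B (by omega)
  exact ⟨skewMax σ τ, not_contains132_skewMax σ τ hσ hτ,
    iff_skewMax_apply σ τ hσAB (by rwa [add_comm]) hτAB⟩

theorem count_exists_mk_mem {n : ℕ} (s : Finset (Fin n)) :
    count (fun i => ∃ h : i < n, (⟨i, h⟩ : Fin n) ∈ s) n = s.card := by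
  rw [count_eq_card_filter_range, ← s.card_map Fin.valEmbedding]
  congr 1
  ext i
  simp only [Finset.mem_filter, Finset.mem_range, Finset.mem_map, Fin.valEmbedding_apply]
  constructor
  · rintro ⟨-, hi, hs⟩
    exact ⟨_, hs, rfl⟩
  · rintro ⟨a, ha, rfl⟩
    exact ⟨a.isLt, a.isLt, ha⟩

theorem stmt_2 (n : ℕ) (A B : Finset (Fin n)) (h : A.card = B.card) :
    ∃ π : Equiv.Perm (Fin n), ¬ Contains132 π ∧ A.image π = B := by
  obtain ⟨π, hπ, hAB⟩ := exists_perm_not_contains132_forall_iff n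
    (fun i => ∃ h : i < n, (⟨i, h⟩ : Fin n) ∈ A) (fun i => ∃ h : i < n, (⟨i, h⟩ : Fin n) ∈ B)
    (by rw [count_exists_mk_mem, count_exists_mk_mem, h])
  simp only [Fin.is_lt, Fin.eta, exists_true_left] at hAB
  refine ⟨π, hπ, Finset.ext fun y => ?_⟩
  rw [Finset.mem_image, ← π.apply_symm_apply y, ← hAB]
  simp only [EmbeddingLike.apply_eq_iff_eq, exists_eq_right]
end

section
/- Let A, B ⊆ {1,…,n} with |A| = |B|, and suppose 1 ∈ A, n ∈ A, 1 ∉ B, n ∉ B. Then there exists k with 2 ≤ k ≤ n−2 such that |A ∩ {1,…,k}| = |B ∩ {n−k+1,…,n}|. -/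
lemma discrete_ivt (g : ℕ → ℤ) (a b : ℕ) (hab : a < b) (ha : 0 < g a) (hb : g b < 0)
    (hstep : ∀ k, a ≤ k → k < b → g k - 1 ≤ g (k + 1)) :
    ∃ k, a < k ∧ k < b ∧ g k = 0 := by
  have hP : ∃ k, a < k ∧ k ≤ b ∧ g k ≤ 0 := ⟨b, hab, le_refl _, hb.le⟩
  classical
  obtain ⟨h1, h2, h3⟩ := Nat.find_spec hP
  set k := Nat.find hP with hk
  have hk1 : a ≤ k - 1 := by omega
  have hprev : 0 < g (k - 1) := by
    rcases eq_or_lt_of_le hk1 with h | h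
    · rwa [← h]
    · have := Nat.find_min hP (m := k - 1) (by omega)
      push_neg at this
      have := this h (by omega)
      omega
  have hstep' := hstep (k - 1) hk1 (by omega)
  rw [show k - 1 + 1 = k by omega] at hstep'
  have hg0 : g k = 0 := by omega
  have hkb : k < b := by
    rcases eq_or_lt_of_le h2 with h | h
    · exfalso; rw [h] at hg0; omega
    · exact h
  exact ⟨k, h1, hkb, hg0⟩

theorem stmt_12 (n : ℕ) (hn : 4 ≤ n) (A B : Finset ℕ)
    (hA : A ⊆ Finset.Icc 1 n) (hB : B ⊆ Finset.Icc 1 n)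
    (hcard : A.card = B.card)
    (h1A : 1 ∈ A) (hnA : n ∈ A) (h1B : 1 ∉ B) (hnB : n ∉ B) :
    ∃ k : ℕ, 2 ≤ k ∧ k ≤ n - 2 ∧
      (A ∩ Finset.Icc 1 k).card = (B ∩ Finset.Icc (n - k + 1) n).card := by
  set g : ℕ → ℤ := fun k =>
    ((A ∩ Finset.Icc 1 k).card : ℤ) - ((B ∩ Finset.Icc (n - k + 1) n).card : ℤ) with hg
  have ha : 0 < g 1 := by
    have e1 : A ∩ Finset.Icc 1 1 = {1} := by
      ext x
      simp only [Finset.mem_inter, Finset.mem_Icc, Finset.mem_singleton]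
      constructor
      · rintro ⟨-, h, h'⟩; omega
      · rintro rfl; exact ⟨h1A, le_refl _, le_refl _⟩
    have e2 : B ∩ Finset.Icc (n - 1 + 1) n = ∅ := by
      ext x
      simp only [Finset.mem_inter, Finset.mem_Icc, Finset.notMem_empty, iff_false]
      rintro ⟨hx, h, h'⟩
      have : x = n := by omega
      exact h1B (by rw [this] at hx; exact absurd hx hnB)
    show 0 < ((A ∩ Finset.Icc 1 1).card : ℤ) - ((B ∩ Finset.Icc (n - 1 + 1) n).card : ℤ)
    rw [e1, e2]
    simp
  have hb : g (n - 1) < 0 := by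
    have e1 : A ∩ Finset.Icc 1 (n - 1) = A.erase n := by
      ext x
      simp only [Finset.mem_inter, Finset.mem_Icc, Finset.mem_erase]
      constructor
      · rintro ⟨hx, h, h'⟩; exact ⟨by omega, hx⟩
      · rintro ⟨hne, hx⟩
        have := Finset.mem_Icc.mp (hA hx)
        exact ⟨hx, this.1, by omega⟩
    have e2 : B ∩ Finset.Icc (n - (n - 1) + 1) n = B := by
      ext x
      simp only [Finset.mem_inter, Finset.mem_Icc, and_iff_left_iff_imp]
      intro hx
      have := Finset.mem_Icc.mp (hB hx)
      have hx1 : x ≠ 1 := fun h => h1B (h ▸ hx)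
      omega
    have hcerase : (A.erase n).card = A.card - 1 := Finset.card_erase_of_mem hnA
    have hApos : 1 ≤ A.card := Finset.card_pos.mpr ⟨1, h1A⟩
    simp only [hg, e1, e2, hcerase]
    have : A.card = B.card := hcard
    omega
  have hstep : ∀ k, 1 ≤ k → k < n - 1 → g k - 1 ≤ g (k + 1) := by
    intro k hk1 hk2
    have hAmono : (A ∩ Finset.Icc 1 k).card ≤ (A ∩ Finset.Icc 1 (k + 1)).card :=
      Finset.card_le_card (Finset.inter_subset_inter (le_refl _)
        (Finset.Icc_subset_Icc (le_refl _) (by omega)))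
    have hBstep : (B ∩ Finset.Icc (n - (k + 1) + 1) n).card ≤
        (B ∩ Finset.Icc (n - k + 1) n).card + 1 := by
      have hsub : B ∩ Finset.Icc (n - (k + 1) + 1) n ⊆
          insert (n - k) (B ∩ Finset.Icc (n - k + 1) n) := by
        intro x hx
        simp only [Finset.mem_inter, Finset.mem_Icc] at hx
        simp only [Finset.mem_insert, Finset.mem_inter, Finset.mem_Icc]
        rcases eq_or_ne x (n - k) with h | h
        · exact Or.inl h
        · exact Or.inr ⟨hx.1, by omega, hx.2.2⟩
      calc (B ∩ Finset.Icc (n - (k + 1) + 1) n).card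
          ≤ (insert (n - k) (B ∩ Finset.Icc (n - k + 1) n)).card := Finset.card_le_card hsub
        _ ≤ (B ∩ Finset.Icc (n - k + 1) n).card + 1 := Finset.card_insert_le _ _
    simp only [hg]
    omega
  obtain ⟨k, hk1, hk2, hk0⟩ := discrete_ivt g 1 (n - 1) (by omega) ha hb hstep
  refine ⟨k, by omega, by omega, ?_⟩
  simp only [hg] at hk0
  omega
end

section
/- Define permutations π, ρ ∈ S_n to be adjacent if |π⁻¹(i) − ρ⁻¹(i)| ≤ 1 for every i ∈ {1,…,n}. Then π and ρ are adjacent if and only if ρ = π∘s(p₁)∘⋯∘s(p_k) for some set of positions p₁,…,p_k ∈ {1,…,n−1} with |p_i − p_j| ≥ 2 for all i ≠ j, where s(p) denotes the transposition swapping p and p+1. -/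
/-!
Write `σ = π⁻¹ * ρ`; adjacency says that `σ` moves every point by at most one. For such `σ`,
`σ a = a + 1` forces `σ (a + 1) = a`: otherwise `σ (a + 1) = a + 2`, and the same argument one
step higher pushes the shift up to the top of `Fin n`, which is impossible. Hence `σ` is the
product of the swaps `s(a)` over the points with `σ a = a + 1`, and these are non-overlapping.
Conversely, non-overlapping swaps are disjoint, so their product moves each point by at most one.
-/

/-- Two permutations are adjacent if every element changes its position by at most 1. -/
def Adjacent {n : ℕ} (π ρ : Equiv.Perm (Fin n)) : Prop :=
  ∀ i : Fin n, |((π⁻¹ i : ℕ) : ℤ) - ((ρ⁻¹ i : ℕ) : ℤ)| ≤ 1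

def NonOverlapping {k : ℕ} (p : Fin k → ℕ) : Prop :=
  ∀ i j, i ≠ j → p i + 2 ≤ p j ∨ p j + 2 ≤ p i

namespace Equiv.Perm

variable {n : ℕ}

def MovesAtMostOne (σ : Perm (Fin n)) : Prop :=
  ∀ j : Fin n, (σ j : ℕ) ≤ j + 1 ∧ (j : ℕ) ≤ σ j + 1

theorem adjacent_iff_movesAtMostOne {π ρ : Perm (Fin n)} :
    Adjacent π ρ ↔ MovesAtMostOne (π⁻¹ * ρ) := by
  refine ⟨fun h j => ?_, fun h i => ?_⟩
  · have := abs_le.mp (h (ρ j))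
    simp only [mul_apply, coe_inv, symm_apply_apply] at this ⊢
    omega
  · have := h (ρ⁻¹ i)
    rw [abs_le]
    simp only [mul_apply, coe_inv, apply_symm_apply] at this ⊢
    omega

section AdjSwaps

variable {k : ℕ} (p : Fin k → ℕ) (h : ∀ i, p i + 1 < n)

def adjSwaps : List (Perm (Fin n)) :=
  List.ofFn fun i => swap (⟨p i, Nat.lt_of_succ_lt (h i)⟩ : Fin n) ⟨p i + 1, h i⟩

variable {p h}

theorem pairwise_disjoint_adjSwaps (hsep : NonOverlapping p) :
    (adjSwaps p h).Pairwise Disjoint := by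
  refine List.pairwise_ofFn.mpr fun i j hij => disjoint_swap_swap ?_
  have := hsep i j hij.ne
  simp only [List.nodup_cons, List.mem_cons, List.not_mem_nil, or_false, List.nodup_nil,
    and_true, not_false_eq_true, Fin.ext_iff, not_or]
  omega

theorem prod_adjSwaps_apply_of_mem (hsep : NonOverlapping p)
    (i : Fin k) {j : Fin n} (hj : (j : ℕ) = p i ∨ (j : ℕ) = p i + 1) :
    (adjSwaps p h).prod j =
      swap (⟨p i, Nat.lt_of_succ_lt (h i)⟩ : Fin n) ⟨p i + 1, h i⟩ j := by
  refine (eq_on_support_mem_disjoint ((List.mem_ofFn' _ _).mpr ⟨i, rfl⟩)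
    (pairwise_disjoint_adjSwaps hsep) j ?_).symm
  rw [support_swap (by simp [Fin.ext_iff])]
  simpa [Fin.ext_iff] using hj

theorem prod_adjSwaps_apply_of_forall_ne {j : Fin n}
    (hj : ∀ i, (j : ℕ) ≠ p i ∧ (j : ℕ) ≠ p i + 1) :
    (adjSwaps p h).prod j = j := by
  have : (adjSwaps p h).prod ∈ MulAction.stabilizer (Perm (Fin n)) j := by
    refine (MulAction.stabilizer _ j).list_prod_mem fun f hf => ?_
    obtain ⟨i, rfl⟩ := (List.mem_ofFn' _ _).mp hf
    rw [MulAction.mem_stabilizer_iff]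
    exact swap_apply_of_ne_of_ne (by simp [Fin.ext_iff, (hj i).1])
      (by simp [Fin.ext_iff, (hj i).2])
  exact this

theorem movesAtMostOne_prod_adjSwaps (hsep : NonOverlapping p) :
    MovesAtMostOne (adjSwaps p h).prod := by
  intro j
  by_cases hj : ∃ i, (j : ℕ) = p i ∨ (j : ℕ) = p i + 1
  · obtain ⟨i, hi⟩ := hj
    rw [prod_adjSwaps_apply_of_mem hsep i hi, swap_apply_def]
    split_ifs <;> simp only [Fin.ext_iff] at * <;> omega
  · push Not at hj
    rw [prod_adjSwaps_apply_of_forall_ne hj]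
    omega

namespace MovesAtMostOne

variable {σ : Perm (Fin n)}

theorem inv (hσ : MovesAtMostOne σ) : MovesAtMostOne σ⁻¹ := fun j => by
  have := hσ (σ⁻¹ j)
  simp only [coe_inv, apply_symm_apply] at this ⊢
  omega

theorem apply_succ_of_apply_eq_succ (hσ : MovesAtMostOne σ) {a b : Fin n}
    (hab : (b : ℕ) = a + 1) (h : σ a = b) : σ b = a := by
  by_contra hne
  have hσb : (σ b : ℕ) = b + 1 := by
    have hb_ne : σ b ≠ b := fun hb => by
      have := σ.injective (h.trans hb.symm)
      omega
    simp only [ne_eq, Fin.ext_iff] at hne hb_ne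
    have := hσ b
    omega
  let c : Fin n := ⟨b + 1, hσb ▸ (σ b).isLt⟩
  have hσc : σ c = b := hσ.apply_succ_of_apply_eq_succ rfl (Fin.ext hσb)
  have := σ.injective (hσc.trans h.symm)
  simp only [c, Fin.ext_iff] at this
  omega
termination_by n - a

theorem apply_eq_succ_of_apply_succ (hσ : MovesAtMostOne σ) {a b : Fin n}
    (hab : (b : ℕ) = a + 1) (h : σ b = a) : σ a = b := by
  have := hσ.inv.apply_succ_of_apply_eq_succ hab (inv_eq_iff_eq.mpr h.symm)
  exact (inv_eq_iff_eq.mp this).symm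

theorem add_two_le_or_add_two_le (hσ : MovesAtMostOne σ) {a b : Fin n}
    (ha : (σ a : ℕ) = a + 1) (hb : (σ b : ℕ) = b + 1) (hab : a ≠ b) :
    (a : ℕ) + 2 ≤ b ∨ (b : ℕ) + 2 ≤ a := by
  have not_succ :
      ∀ {x y : Fin n}, (σ x : ℕ) = x + 1 → (σ y : ℕ) = y + 1 → (y : ℕ) ≠ x + 1 := by
    intro x y hx hy hxy
    have := hσ.apply_succ_of_apply_eq_succ hxy (Fin.ext (hx.trans hxy.symm))
    rw [Fin.ext_iff] at this
    omega
  have := not_succ ha hb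
  have := not_succ hb ha
  have := Fin.val_ne_of_ne hab
  omega

theorem eq_prod_adjSwaps (hσ : MovesAtMostOne σ)
    (hsep : NonOverlapping p)
    (hrise : ∀ i, (σ ⟨p i, Nat.lt_of_succ_lt (h i)⟩ : ℕ) = p i + 1)
    (hall : ∀ a : Fin n, (σ a : ℕ) = a + 1 → ∃ i, p i = a) :
    σ = (adjSwaps p h).prod := by
  have hfall : ∀ i, σ ⟨p i + 1, h i⟩ = ⟨p i, Nat.lt_of_succ_lt (h i)⟩ :=
    fun i => hσ.apply_succ_of_apply_eq_succ rfl (Fin.ext (hrise i))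
  ext j
  have hj := hσ j
  obtain hj' | hj' | hj' : (σ j : ℕ) = j + 1 ∨ (σ j : ℕ) + 1 = j ∨ σ j = j := by
    rw [Fin.ext_iff]; omega
  · obtain ⟨i, hi⟩ := hall j hj'
    obtain rfl : j = ⟨p i, Nat.lt_of_succ_lt (h i)⟩ := Fin.ext hi.symm
    rw [prod_adjSwaps_apply_of_mem hsep i (Or.inl rfl), swap_apply_left]
    exact hrise i
  · have hback : σ (σ j) = j := hσ.apply_eq_succ_of_apply_succ hj'.symm rfl
    obtain ⟨i, hi⟩ := hall (σ j) (by rw [hback]; omega)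
    obtain rfl : j = ⟨p i + 1, h i⟩ := Fin.ext (by simp only; omega)
    rw [prod_adjSwaps_apply_of_mem hsep i (Or.inr rfl), swap_apply_right, hfall]
  · rw [hj', prod_adjSwaps_apply_of_forall_ne fun i => ⟨fun hi => ?_, fun hi => ?_⟩]
    · have := hrise i
      rw [← (Fin.ext hi : j = ⟨p i, Nat.lt_of_succ_lt (h i)⟩), hj'] at this
      omega
    · have := congrArg Fin.val (hfall i)
      rw [← (Fin.ext hi : j = ⟨p i + 1, h i⟩), hj'] at this
      dsimp only at this
      omega

theorem exists_eq_prod_adjSwaps (hσ : MovesAtMostOne σ) :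
    ∃ (k : ℕ) (p : Fin k → ℕ) (h : ∀ i, p i + 1 < n),
      NonOverlapping p ∧ σ = (adjSwaps p h).prod := by
  let P : Finset (Fin n) := {a | (σ a : ℕ) = a + 1}
  let a : Fin P.card → Fin n := fun i => P.equivFin.symm i
  have hrise : ∀ i, (σ (a i) : ℕ) = a i + 1 :=
    fun i => (Finset.mem_filter.mp (P.equivFin.symm i).2).2
  have ha : a.Injective := Subtype.val_injective.comp P.equivFin.symm.injective
  have hsep : NonOverlapping fun i => (a i : ℕ) := fun i j hij =>
    hσ.add_two_le_or_add_two_le (hrise i) (hrise j) (ha.ne hij)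
  refine ⟨P.card, fun i => a i, fun i => hrise i ▸ (σ (a i)).isLt, hsep,
    hσ.eq_prod_adjSwaps hsep hrise fun x hx => ?_⟩
  exact ⟨P.equivFin ⟨x, by simpa [P] using hx⟩, by simp [a]⟩

end MovesAtMostOne

end AdjSwaps

end Equiv.Perm

theorem stmt_14 (n : ℕ) (π ρ : Equiv.Perm (Fin n)) :
    Adjacent π ρ ↔
      ∃ (k : ℕ) (p : Fin k → ℕ) (h : ∀ i, p i + 1 < n),
        (∀ i j : Fin k, i ≠ j → p i + 2 ≤ p j ∨ p j + 2 ≤ p i) ∧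
        ρ = π * (List.ofFn (fun i : Fin k =>
          Equiv.swap (⟨p i, Nat.lt_of_succ_lt (h i)⟩ : Fin n) ⟨p i + 1, h i⟩)).prod := by
  rw [Equiv.Perm.adjacent_iff_movesAtMostOne]
  constructor
  · intro hσ
    obtain ⟨k, p, h, hsep, hprod⟩ := hσ.exists_eq_prod_adjSwaps
    exact ⟨k, p, h, hsep, inv_mul_eq_iff_eq_mul.mp hprod⟩
  · rintro ⟨k, p, h, hsep, rfl⟩
    rw [inv_mul_cancel_left]
    exact Equiv.Perm.movesAtMostOne_prod_adjSwaps hsep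
end
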